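/- Let n ≥ 1 be a natural number and let φ be a permutation of Fin n × Fin 2 such that the subgroup of the permutation group generated by φ and σ acts transitively on Fin n × Fin 2. Then there exists a natural number g such that orb(φ) + orb(φ ∘ σ) + 2·g = n + 2. -/

import Mathlib

/-!
Multiplying a permutation by a transposition `swap x y` merges the cycles of `x` and `y` when they
differ and splits their common cycle otherwise, so it changes `orb` by exactly one. Hence
`sign f = (-1) ^ (|α| + orb f)`, which makes `|α| + orb f + orb g + orb (f * g)` even.

For the bound `orb f + orb g + orb (f * g) ≤ |α| + 2 · #(orbits of ⟨f, g⟩)`, induct on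
`|α| - orb g`, writing `g = g' * swap a (g a)` with `orb g' = orb g + 1`. Passing from `g'` to `g`
lowers `orb g` by one and changes `orb (f * g)` by one, so the left side does not grow; if `a` and
`g a` lie in different orbits of `⟨f, g'⟩`, then `orb (f * g)` drops as well and `⟨f, g⟩` has one
orbit fewer. For `g = σ` we have `orb σ = n`, `|α| = 2n` and a single orbit.
-/

/-- The number of orbits (cycles, including fixed points) of a permutation `f`
of a finite type `α`: the number of equivalence classes of the relation
`∃ k : ℤ, (f ^ k) x = y`. -/
noncomputable def orb {α : Type*} [Fintype α] (f : Equiv.Perm α) : ℕ :=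
  Nat.card (Quotient (Equiv.Perm.SameCycle.setoid f))

/-- The permutation `σ` of `Fin n × Fin 2` given by `σ (i, j) = (i, j + 1)`. -/
def sigmaPerm (n : ℕ) : Equiv.Perm (Fin n × Fin 2) :=
  Equiv.prodCongr (Equiv.refl (Fin n)) (Equiv.addRight (1 : Fin 2))

open Equiv Equiv.Perm MulAction Subgroup

namespace Setoid

variable {α : Type*} (s : Setoid α) (x y : α)

def merge : Setoid α where
  r a b := s a b ∨ (s a x ∧ s y b) ∨ (s a y ∧ s x b)
  iseqv := by
    refine ⟨fun a => Or.inl (s.refl' a), ?_, ?_⟩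
    · rintro a b (h | ⟨h₁, h₂⟩ | ⟨h₁, h₂⟩)
      · exact Or.inl (s.symm' h)
      · exact Or.inr (Or.inr ⟨s.symm' h₂, s.symm' h₁⟩)
      · exact Or.inr (Or.inl ⟨s.symm' h₂, s.symm' h₁⟩)
    · rintro a b c (h | ⟨h₁, h₂⟩ | ⟨h₁, h₂⟩) (h' | ⟨h₁', h₂'⟩ | ⟨h₁', h₂'⟩)
      · exact Or.inl (s.trans' h h')
      · exact Or.inr (Or.inl ⟨s.trans' h h₁', h₂'⟩)
      · exact Or.inr (Or.inr ⟨s.trans' h h₁', h₂'⟩)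
      · exact Or.inr (Or.inl ⟨h₁, s.trans' h₂ h'⟩)
      · exact Or.inr (Or.inl ⟨h₁, h₂'⟩)
      · exact Or.inl (s.trans' h₁ h₂')
      · exact Or.inr (Or.inr ⟨h₁, s.trans' h₂ h'⟩)
      · exact Or.inl (s.trans' h₁ h₂')
      · exact Or.inr (Or.inr ⟨h₁, h₂'⟩)

theorem le_merge : s ≤ s.merge x y := fun _ _ h => Or.inl h

theorem merge_rel : s.merge x y x y := Or.inr (Or.inl ⟨s.refl' x, s.refl' y⟩)

variable {s x y}

theorem merge_le {t : Setoid α} (hst : s ≤ t) (hxy : t x y) : s.merge x y ≤ t := by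
  rintro a b (h | ⟨h₁, h₂⟩ | ⟨h₁, h₂⟩)
  · exact hst h
  · exact t.trans' (hst h₁) (t.trans' hxy (hst h₂))
  · exact t.trans' (hst h₁) (t.trans' (t.symm' hxy) (hst h₂))

theorem merge_eq_self (h : s x y) : s.merge x y = s :=
  le_antisymm (merge_le le_rfl h) (s.le_merge x y)

theorem rel_swap_apply [DecidableEq α] (h : s x y) (a : α) : s (swap x y a) a := by
  rcases eq_or_ne a x with rfl | hax
  · rw [swap_apply_left]; exact s.symm' h
  rcases eq_or_ne a y with rfl | hay
  · rw [swap_apply_right]; exact h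
  rw [swap_apply_of_ne_of_ne hax hay]

theorem card_quotient_le_of_le [Finite α] {t : Setoid α} (h : s ≤ t) :
    Nat.card (Quotient t) ≤ Nat.card (Quotient s) :=
  Nat.card_le_card_of_surjective (Quotient.map' id fun _ _ hab => h hab)
    (Quotient.ind fun a => ⟨Quotient.mk s a, rfl⟩)

theorem card_quotient_merge [Finite α] (h : ¬ s x y) :
    Nat.card (Quotient s) = Nat.card (Quotient (s.merge x y)) + 1 := by
  classical
  rw [← Finite.card_option]
  -- the class of `y` goes to `none`, every other class to its image
  let e : Quotient s → Option (Quotient (s.merge x y)) :=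
    Quotient.lift (fun a => if s a y then none else some (Quotient.mk _ a)) fun a b hab => by
      by_cases ha : s a y
      · rw [if_pos ha, if_pos (s.trans' (s.symm' hab) ha)]
      · rw [if_neg ha, if_neg fun hb => ha (s.trans' hab hb)]
        exact congrArg some (Quotient.sound (Or.inl hab))
  refine Nat.card_eq_of_bijective e ⟨?_, ?_⟩
  · refine Quotient.ind₂ fun a b hab => Quotient.sound ?_
    by_cases ha : s a y <;> by_cases hb : s b y <;>
      simp only [e, Quotient.lift_mk, ha, hb, if_true, if_false, reduceCtorEq,
        Option.some.injEq] at hab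
    · exact s.trans' ha (s.symm' hb)
    · rcases Quotient.exact hab with h' | ⟨-, h'⟩ | ⟨h', -⟩
      · exact h'
      · exact absurd (s.symm' h') hb
      · exact absurd h' ha
  · rintro (_ | q)
    · exact ⟨Quotient.mk s y, by simp [e]⟩
    · induction q using Quotient.ind with | _ b => ?_
      by_cases hb : s b y
      · refine ⟨Quotient.mk s x, ?_⟩
        simp only [e, Quotient.lift_mk, if_neg h]
        exact congrArg some (Quotient.sound (Or.inr (Or.inl ⟨s.refl' x, s.symm' hb⟩)))
      · exact ⟨Quotient.mk s b, by simp [e, hb]⟩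

end Setoid

namespace Equiv.Perm

variable {α : Type*}

theorem rel_apply_of_mem_closure {S : Set (Perm α)} {u : Setoid α}
    (hS : ∀ s ∈ S, ∀ a, u (s a) a) {p : Perm α} (hp : p ∈ closure S) (a : α) : u (p a) a := by
  induction hp using closure_induction generalizing a with
  | mem s hs => exact hS s hs a
  | one => exact u.refl' a
  | mul p q _ _ hp hq => exact u.trans' (hp (q a)) (hq a)
  | inv p _ hp => simpa using u.symm' (hp (p⁻¹ a))

theorem orbitRel_closure_le {S : Set (Perm α)} {u : Setoid α} (hS : ∀ s ∈ S, ∀ a, u (s a) a) :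
    orbitRel (closure S) α ≤ u := by
  rintro _ b ⟨⟨p, hp⟩, rfl⟩
  exact rel_apply_of_mem_closure hS hp b

theorem orbitRel_apply_of_mem_closure {S : Set (Perm α)} {p : Perm α} (hp : p ∈ closure S)
    (a : α) : orbitRel (closure S) α (p a) a :=
  mem_orbit a (⟨p, hp⟩ : closure S)

theorem sameCycle_setoid_le {f : Perm α} {u : Setoid α} (hf : ∀ a, u (f a) a) :
    SameCycle.setoid f ≤ u := by
  intro a b hab
  obtain ⟨k, rfl⟩ : f.SameCycle a b := hab
  have hfk : f ^ k ∈ closure {f} := zpow_mem (subset_closure (Set.mem_singleton f)) k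
  exact u.symm' (rel_apply_of_mem_closure (by rintro _ rfl; exact hf) hfk a)

theorem orb_le_card [Fintype α] (f : Perm α) : orb f ≤ Nat.card α :=
  Nat.card_le_card_of_surjective _ Quotient.mk_surjective

theorem orb_one [Fintype α] : orb (1 : Perm α) = Nat.card α := by
  have : SameCycle.setoid (1 : Perm α) = ⊥ := Setoid.ext fun _ _ => sameCycle_one
  rw [orb, this, Nat.card_congr Setoid.quotientBotEquiv]

variable [DecidableEq α] {f : Perm α} {x y : α}

theorem sameCycle_setoid_mul_swap_le (f : Perm α) (x y : α) :
    SameCycle.setoid (f * swap x y) ≤ (SameCycle.setoid f).merge x y :=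
  sameCycle_setoid_le fun a =>
    ((SameCycle.setoid f).merge x y).trans' (Setoid.le_merge _ x y ⟨-1, by simp⟩)
      (Setoid.rel_swap_apply (Setoid.merge_rel _ x y) a)

theorem sameCycle_setoid_le_merge_mul_swap (f : Perm α) (x y : α) :
    SameCycle.setoid f ≤ (SameCycle.setoid (f * swap x y)).merge x y := by
  simpa [mul_swap_mul_self] using sameCycle_setoid_mul_swap_le (f * swap x y) x y

theorem sameCycle_setoid_eq_merge (h : f.SameCycle x y) :
    SameCycle.setoid f = (SameCycle.setoid (f * swap x y)).merge x y := by
  refine le_antisymm (sameCycle_setoid_le_merge_mul_swap f x y) (Setoid.merge_le ?_ h)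
  simpa [Setoid.merge_eq_self (s := SameCycle.setoid f) h] using sameCycle_setoid_mul_swap_le f x y

theorem orbitRel_closure_pair_eq_merge (f g : Perm α) {x y : α}
    (h : orbitRel (closure {f, g}) α x y) :
    orbitRel (closure {f, g}) α = (orbitRel (closure {f, g * swap x y}) α).merge x y := by
  set J := orbitRel (closure {f, g * swap x y}) α
  have hf : f ∈ closure {f, g * swap x y} := subset_closure (by simp)
  have hg' : g * swap x y ∈ closure {f, g * swap x y} := subset_closure (by simp)
  refine le_antisymm (orbitRel_closure_le ?_) (Setoid.merge_le (orbitRel_closure_le ?_) h) <;>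
    simp only [Set.mem_insert_iff, Set.mem_singleton_iff, forall_eq_or_imp, forall_eq]
  · refine ⟨fun a => J.le_merge x y (orbitRel_apply_of_mem_closure hf a), fun a => ?_⟩
    have : g a = (g * swap x y) (swap x y a) := by simp
    rw [this]
    exact (J.merge x y).trans' (J.le_merge x y (orbitRel_apply_of_mem_closure hg' _))
      (Setoid.rel_swap_apply (J.merge_rel x y) a)
  · have hg : g ∈ closure {f, g} := subset_closure (by simp)
    refine ⟨orbitRel_apply_of_mem_closure (subset_closure (by simp)), fun a => ?_⟩
    exact (orbitRel (closure {f, g}) α).trans' (orbitRel_apply_of_mem_closure hg _)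
      (Setoid.rel_swap_apply h a)

variable [Fintype α]

theorem orb_mul_swap_of_sameCycle_of_not_sameCycle_mul_swap (h : f.SameCycle x y)
    (h' : ¬ (f * swap x y).SameCycle x y) : orb (f * swap x y) = orb f + 1 := by
  rw [orb, orb, sameCycle_setoid_eq_merge h]
  exact Setoid.card_quotient_merge h'

theorem orb_mul_swap_apply_self {a : α} (ha : f a ≠ a) :
    orb (f * swap a (f a)) = orb f + 1 := by
  exact orb_mul_swap_of_sameCycle_of_not_sameCycle_mul_swap (sameCycle_apply_right.2 .rfl)
    fun hc => ha (hc.eq_of_right (by simp [Function.IsFixedPt])).symm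

theorem orb_induction_on {motive : Perm α → Prop} (f : Perm α) (one : motive 1)
    (mul_swap : ∀ f a, f a ≠ a → motive (f * swap a (f a)) → motive f) : motive f := by
  induction hk : Nat.card α - orb f using Nat.strong_induction_on generalizing f with
  | _ k ih =>
    by_cases hf : f = 1
    · exact hf ▸ one
    obtain ⟨a, ha⟩ : ∃ a, f a ≠ a := not_forall.1 fun h => hf (Equiv.ext h)
    have := orb_mul_swap_apply_self ha
    have := orb_le_card (f * swap a (f a))
    exact mul_swap f a ha (ih _ (by omega) _ rfl)

theorem sign_eq_neg_one_pow_orb (f : Perm α) : sign f = (-1) ^ (Nat.card α + orb f) := by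
  induction f using orb_induction_on with
  | one => simp [orb_one, ← two_mul]
  | mul_swap f a ha ih =>
    rw [orb_mul_swap_apply_self ha, sign_mul, sign_swap ha.symm, ← add_assoc, pow_succ] at ih
    simpa using ih

theorem orb_mul_swap_ne (hxy : x ≠ y) : orb (f * swap x y) ≠ orb f := by
  intro h
  have := sign_mul f (swap x y)
  rw [sign_swap hxy, sign_eq_neg_one_pow_orb, sign_eq_neg_one_pow_orb f, h, mul_neg_one] at this
  exact units_ne_neg_self _ this

/-- If both or neither held, `f` and `f * swap x y` would have the same number of cycles,
contradicting `orb_mul_swap_ne`. -/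
theorem sameCycle_mul_swap_iff (hxy : x ≠ y) :
    (f * swap x y).SameCycle x y ↔ ¬ f.SameCycle x y := by
  refine ⟨fun hg hf => orb_mul_swap_ne (f := f) hxy ?_,
    fun hf => by_contra fun hg => orb_mul_swap_ne (f := f) hxy ?_⟩
  · rw [orb, orb, sameCycle_setoid_eq_merge hf, Setoid.merge_eq_self hg]
  · have hmerge : (SameCycle.setoid f).merge x y = (SameCycle.setoid (f * swap x y)).merge x y :=
      le_antisymm
        (Setoid.merge_le (sameCycle_setoid_le_merge_mul_swap f x y) (Setoid.merge_rel _ x y))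
        (Setoid.merge_le (sameCycle_setoid_mul_swap_le f x y) (Setoid.merge_rel _ x y))
    rw [orb, orb, Setoid.card_quotient_merge hg,
      Setoid.card_quotient_merge (s := SameCycle.setoid f) hf, hmerge]

theorem orb_mul_swap_of_sameCycle (hxy : x ≠ y) (h : f.SameCycle x y) :
    orb (f * swap x y) = orb f + 1 :=
  orb_mul_swap_of_sameCycle_of_not_sameCycle_mul_swap h fun hg =>
    (sameCycle_mul_swap_iff hxy).1 hg h

theorem orb_mul_swap_of_not_sameCycle (h : ¬ f.SameCycle x y) :
    orb f = orb (f * swap x y) + 1 := by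
  have hxy : x ≠ y := by rintro rfl; exact h .rfl
  simpa [mul_swap_mul_self] using
    orb_mul_swap_of_sameCycle hxy ((sameCycle_mul_swap_iff hxy).2 h)

theorem orb_mul_swap_le (f : Perm α) (x y : α) : orb (f * swap x y) ≤ orb f + 1 := by
  rcases eq_or_ne x y with rfl | hxy
  · rw [swap_self]
    exact Nat.le_succ _
  by_cases h : f.SameCycle x y
  · exact (orb_mul_swap_of_sameCycle hxy h).le
  · have := orb_mul_swap_of_not_sameCycle h
    omega

theorem even_card_add_orb_add_orb_add_orb_mul (f g : Perm α) :
    Even (Nat.card α + orb f + orb g + orb (f * g)) := by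
  have hsign := sign_mul f g
  rw [sign_eq_neg_one_pow_orb, sign_eq_neg_one_pow_orb f, sign_eq_neg_one_pow_orb g,
    ← pow_add] at hsign
  have heven : Even (Nat.card α + orb (f * g) + (Nat.card α + orb f + (Nat.card α + orb g))) := by
    rw [← neg_one_pow_eq_one_iff_even (R := ℤˣ) (by decide), pow_add, hsign, ← sq, Int.units_sq]
  have : Nat.card α + orb (f * g) + (Nat.card α + orb f + (Nat.card α + orb g)) =
      Nat.card α + orb f + orb g + orb (f * g) + 2 * Nat.card α := by ring
  rw [this] at heven
  exact (Nat.even_add.1 heven).2 (even_two_mul _)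

theorem orb_add_orb_add_orb_mul_le (f g : Perm α) :
    orb f + orb g + orb (f * g) ≤
      Nat.card α + 2 * Nat.card (orbitRel.Quotient (closure {f, g}) α) := by
  induction g using orb_induction_on with
  | one =>
    have : orb f ≤ Nat.card (orbitRel.Quotient (closure {f, 1}) α) :=
      Setoid.card_quotient_le_of_le (orbitRel_closure_le (by
        simp only [Set.mem_insert_iff, Set.mem_singleton_iff, forall_eq_or_imp, forall_eq]
        exact ⟨fun a => ⟨-1, by simp⟩, fun a => SameCycle.rfl⟩))
    rw [orb_one, mul_one]
    omega
  | mul_swap g a ha ih =>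
    have hrel : orbitRel (closure {f, g}) α a (g a) :=
      Setoid.symm' _ (orbitRel_apply_of_mem_closure (subset_closure (by simp)) a)
    unfold orbitRel.Quotient at ih ⊢
    rw [orbitRel_closure_pair_eq_merge f g hrel]
    set g' := g * swap a (g a)
    have hfg : f * g = f * g' * swap a (g a) := by simp [g', mul_assoc]
    have hg' : orb g' = orb g + 1 := orb_mul_swap_apply_self ha
    rw [hfg]
    by_cases hJ : orbitRel (closure {f, g'}) α a (g a)
    · have := orb_mul_swap_le (f * g') a (g a)
      rw [Setoid.merge_eq_self hJ]
      omega
    · have hcycle : ¬ (f * g').SameCycle a (g a) := fun hc =>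
        hJ (sameCycle_setoid_le (orbitRel_apply_of_mem_closure
          (mul_mem (subset_closure (by simp)) (subset_closure (by simp)))) hc)
      have := orb_mul_swap_of_not_sameCycle hcycle
      have := Setoid.card_quotient_merge hJ
      omega

theorem exists_genus_of_isPretransitive (f g : Perm α) [IsPretransitive (closure {f, g}) α] :
    ∃ h : ℕ, orb f + orb g + orb (f * g) + 2 * h = Nat.card α + 2 := by
  have hle := orb_add_orb_add_orb_mul_le f g
  have hone : Nat.card (orbitRel.Quotient (closure {f, g}) α) ≤ 1 :=
    Finite.card_le_one_iff_subsingleton.2 ((pretransitive_iff_subsingleton_quotient _ _).1 ‹_›)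
  obtain ⟨k, hk⟩ := even_card_add_orb_add_orb_add_orb_mul f g
  exact ⟨(Nat.card α + 2 - (orb f + orb g + orb (f * g))) / 2, by omega⟩

end Equiv.Perm

theorem orb_sigmaPerm (n : ℕ) : orb (sigmaPerm n) = n := by
  have : SameCycle.setoid (sigmaPerm n) = Setoid.ker Prod.fst := by
    refine le_antisymm (sameCycle_setoid_le fun _ => rfl) ?_
    rintro ⟨i, j⟩ ⟨i', j'⟩ (rfl : i = i')
    fin_cases j <;> fin_cases j'
    exacts [.rfl, ⟨1, rfl⟩, ⟨1, rfl⟩, .rfl]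
  rw [orb, this, Nat.card_congr (Setoid.quotientKerEquivOfSurjective _ Prod.fst_surjective),
    Nat.card_fin]

theorem orb_add_orb_genus_general (n : ℕ)
    (φ : Equiv.Perm (Fin n × Fin 2))
    (htrans : MulAction.IsPretransitive
      (Subgroup.closure ({φ, sigmaPerm n} : Set (Equiv.Perm (Fin n × Fin 2))))
      (Fin n × Fin 2)) :
    ∃ g : ℕ, orb φ + orb (φ * sigmaPerm n) + 2 * g = n + 2 := by
  obtain ⟨g, hg⟩ := exists_genus_of_isPretransitive φ (sigmaPerm n)
  rw [orb_sigmaPerm, Nat.card_eq_fintype_card, Fintype.card_prod, Fintype.card_fin,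
    Fintype.card_fin] at hg
  exact ⟨g, by omega⟩

theorem orb_add_orb_genus (n : ℕ) (hn : 1 ≤ n)
    (φ : Equiv.Perm (Fin n × Fin 2))
    (htrans : MulAction.IsPretransitive
      (Subgroup.closure ({φ, sigmaPerm n} : Set (Equiv.Perm (Fin n × Fin 2))))
      (Fin n × Fin 2)) :
    ∃ g : ℕ, orb φ + orb (φ * sigmaPerm n) + 2 * g = n + 2 :=
  orb_add_orb_genus_general n φ htrans
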